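/- arXiv:math/0210114 — 3 statements merged into one kernel-verified Lean document; each statement's English description precedes it below -/
import Mathlib

section
/- Let T be a triangulated category and Q a strictly full triangulated subcategory that is right-admissible. Then the composite functor Q^⊥ → T → T/Q to the Verdier quotient is an equivalence of categories. -/
open CategoryTheory Limits Pretriangulated

set_option linter.unusedSectionVars false

section Aux

variable {T : Type} [Category T] [HasZeroObject T] [HasShift T ℤ]
    [Preadditive T] [∀ n : ℤ, (shiftFunctor T n).Additive] [Pretriangulated T]
    [IsTriangulated T]
    (Q : ObjectProperty T) [Q.IsTriangulated]

/-- If `s : Z ⟶ Y` has cone in `Q` and `Z` is in the right orthogonal of `Q`,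
then `s` admits a retraction. -/
lemma stmt_11_retract {Z Y : T} (s : Z ⟶ Y) (hs : Q.trW s)
    (hZ : ∀ (W : T), Q W → ∀ φ : W ⟶ Z, φ = 0) :
    ∃ r : Y ⟶ Z, s ≫ r = 𝟙 Z := by
  obtain ⟨C, g, h, hT, hC⟩ := hs
  have hrot := inv_rot_of_distTriang _ hT
  obtain ⟨r, hr⟩ := Triangle.yoneda_exact₂ _ hrot (𝟙 Z)
    (hZ _ (Q.le_shift (-1) _ hC) _)
  exact ⟨r, hr.symm⟩

end Aux

/-- If `Q` is a right-admissible strictly full triangulated subcategory of `T`, then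
the composite `Q^⊥ ↪ T ⟶ T/Q` to the Verdier quotient (i.e. the localization of `T`
at the class `Q.W` of morphisms whose cone lies in `Q`) is an equivalence. -/
theorem stmt_11 {T : Type} [Category T] [HasZeroObject T] [HasShift T ℤ]
    [Preadditive T] [∀ n : ℤ, (shiftFunctor T n).Additive] [Pretriangulated T]
    [IsTriangulated T]
    (Q : ObjectProperty T) [Q.IsTriangulated] [Q.IsClosedUnderIsomorphisms]
    (hadm : ∀ X : T, ∃ (X' X'' : T) (f : X' ⟶ X) (g : X ⟶ X'') (h : X'' ⟶ X'⟦(1 : ℤ)⟧),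
      (Triangle.mk f g h ∈ distTriang T) ∧ Q X' ∧
        (∀ (Y : T), Q Y → ∀ φ : Y ⟶ X'', φ = 0))
    {D : Type} [Category D] (L : T ⥤ D) [L.IsLocalization Q.trW] :
    (ObjectProperty.ι (fun X : T => ∀ (Y : T), Q Y → ∀ φ : Y ⟶ X, φ = 0) ⋙ L).IsEquivalence := by
  set P : ObjectProperty T := fun X : T => ∀ (Y : T), Q Y → ∀ φ : Y ⟶ X, φ = 0 with hP
  set F := ObjectProperty.ι P ⋙ L with hF
  have faithful : F.Faithful := by
    constructor
    intro Z₁ Z₂ g₁ g₂ hg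
    have hg' : L.map (g₁.hom : Z₁.obj ⟶ Z₂.obj) = L.map (g₂.hom : Z₁.obj ⟶ Z₂.obj) := hg
    rw [MorphismProperty.map_eq_iff_postcomp L Q.trW] at hg'
    obtain ⟨Y, s, hs, fac⟩ := hg'
    obtain ⟨r, hr⟩ := stmt_11_retract Q s hs Z₂.property
    apply (ObjectProperty.ι P).map_injective
    have h2 := congrArg (fun t => t ≫ r) fac
    simpa only [Category.assoc, hr, Category.comp_id, ObjectProperty.ι_map] using h2
  have full : F.Full := by
    constructor
    intro Z₁ Z₂ ψ
    obtain ⟨φ, hφ⟩ := Localization.exists_leftFraction L Q.trW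
      (ψ : L.obj Z₁.obj ⟶ L.obj Z₂.obj)
    obtain ⟨r, hr⟩ := stmt_11_retract Q φ.s φ.hs Z₂.property
    refine ⟨ObjectProperty.homMk (φ.f ≫ r : Z₁.obj ⟶ Z₂.obj), ?_⟩
    have hiso : IsIso (L.map φ.s) := Localization.inverts L Q.trW _ φ.hs
    have hinv : L.map r = inv (L.map φ.s) := by
      apply IsIso.eq_inv_of_hom_inv_id
      rw [← L.map_comp, hr, L.map_id]
    show L.map (φ.f ≫ r) = ψ
    rw [hφ, L.map_comp, hinv]
    rfl
  have essSurj : F.EssSurj := by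
    have : L.EssSurj := Localization.essSurj L Q.trW
    constructor
    intro d
    obtain ⟨X', X'', f, g, h, hT, hX', hX''⟩ := hadm (L.objPreimage d)
    have hg : Q.trW g := ObjectProperty.trW.mk' Q hT hX'
    have : IsIso (L.map g) := Localization.inverts L Q.trW _ hg
    exact ⟨⟨X'', hX''⟩, ⟨(asIso (L.map g)).symm ≪≫ L.objObjPreimageIso d⟩⟩
  exact { }
end

section
/- Let Q, T_0, Q_0 be triangulated subcategories of a triangulated category T, with Q_0 ⊆ Q ∩ T_0. Suppose every morphism from an object of T_0 to an object of Q factors through an object of Q_0. Then the induced functor T_0/Q_0 → T/Q between Verdier quotients is fully faithful. -/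
open CategoryTheory Limits Pretriangulated

/-- Let `ι : T₀ ⥤ T` be a fully faithful triangulated functor (the inclusion of a
triangulated subcategory), `Q` a triangulated subcategory of `T` and `Q₀` a
triangulated subcategory of `T₀` with `ι(Q₀) ⊆ Q`. If every morphism from an object
of `T₀` to an object of `Q` factors through an object of `Q₀`, then the induced
functor `T₀/Q₀ ⥤ T/Q` between Verdier quotients (localizations at `Q₀.W` resp. `Q.W`)
is fully faithful. -/
theorem stmt_13 {T₀ T : Type} [Category T₀] [Category T]
    [HasZeroObject T₀] [HasShift T₀ ℤ] [Preadditive T₀]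
    [∀ n : ℤ, (shiftFunctor T₀ n).Additive] [Pretriangulated T₀] [IsTriangulated T₀]
    [HasZeroObject T] [HasShift T ℤ] [Preadditive T]
    [∀ n : ℤ, (shiftFunctor T n).Additive] [Pretriangulated T] [IsTriangulated T]
    (ι : T₀ ⥤ T) [ι.Full] [ι.Faithful] [ι.CommShift ℤ] [ι.IsTriangulated]
    (Q : ObjectProperty T) [Q.IsTriangulated] [Q.IsClosedUnderIsomorphisms]
    (Q₀ : ObjectProperty T₀) [Q₀.IsTriangulated] [Q₀.IsClosedUnderIsomorphisms]
    (hsub : ∀ x : T₀, Q₀ x → Q (ι.obj x))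
    (hfact : ∀ (x : T₀) (q : T), Q q → ∀ f : ι.obj x ⟶ q,
      ∃ (y : T₀) (_ : Q₀ y) (g : x ⟶ y) (h : ι.obj y ⟶ q), f = ι.map g ≫ h)
    {D₀ D : Type} [Category D₀] [Category D]
    (L₀ : T₀ ⥤ D₀) [L₀.IsLocalization Q₀.trW]
    (L : T ⥤ D) [L.IsLocalization Q.trW]
    (G : D₀ ⥤ D) (e : L₀ ⋙ G ≅ ι ⋙ L) :
    G.Full ∧ G.Faithful := by
  -- `ι` sends `Q₀.W` into `Q.W`
  have hW : ∀ {x y : T₀} (k : x ⟶ y), Q₀.trW k → Q.trW (ι.map k) := by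
    rintro x y k ⟨z, g, h, mem, hz⟩
    exact ⟨_, _, _, ι.map_distinguished _ mem, hsub _ hz⟩
  -- key step for faithfulness
  have key_faithful : ∀ {X Y : T₀} (f₁ f₂ : X ⟶ Y),
      L.map (ι.map f₁) = L.map (ι.map f₂) → L₀.map f₁ = L₀.map f₂ := by
    intro X Y f₁ f₂ h
    rw [MorphismProperty.map_eq_iff_postcomp L Q.trW] at h
    obtain ⟨Z, s, hs, fac⟩ := h
    obtain ⟨c, g, h', mem, hc⟩ := hs
    have hzero : ι.map (f₁ - f₂) ≫ (Triangle.mk s g h').invRotate.mor₂ = 0 := by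
      change ι.map (f₁ - f₂) ≫ s = 0
      rw [ι.map_sub, Preadditive.sub_comp, fac, sub_self]
    obtain ⟨w, hw⟩ := Pretriangulated.Triangle.coyoneda_exact₂ _
      (inv_rot_of_distTriang _ mem) (ι.map (f₁ - f₂)) hzero
    obtain ⟨y, hy, g₀, h₀, hfac'⟩ := hfact X ((Triangle.mk s g h').invRotate.obj₁)
      (Q.le_shift (-1) c hc) w
    have hd : f₁ - f₂ = g₀ ≫ ι.preimage (h₀ ≫ (Triangle.mk s g h').invRotate.mor₁) := by
      apply ι.map_injective
      rw [ι.map_comp, ι.map_preimage, hw, hfac', Category.assoc]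
      rfl
    obtain ⟨z₀, s₀, h₁, mem₁⟩ := distinguished_cocone_triangle
      (ι.preimage (h₀ ≫ (Triangle.mk s g h').invRotate.mor₁))
    have hs₀ : Q₀.trW s₀ := ObjectProperty.trW.mk' (P := Q₀) mem₁ hy
    have hpost : f₁ ≫ s₀ = f₂ ≫ s₀ := by
      have h0 : (f₁ - f₂) ≫ s₀ = 0 := by
        have hz := comp_distTriang_mor_zero₁₂ _ mem₁
        simp only [Triangle.mk_mor₁, Triangle.mk_mor₂] at hz
        erw [hd, Category.assoc, hz, Limits.comp_zero]
      rw [← sub_eq_zero, ← Preadditive.sub_comp]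
      exact h0
    rw [MorphismProperty.map_eq_iff_postcomp L₀ Q₀.trW]
    exact ⟨_, s₀, hs₀, hpost⟩
  -- key step for fullness
  have key_full : ∀ (X Y : T₀) (f : L.obj (ι.obj X) ⟶ L.obj (ι.obj Y)),
      ∃ (X₀ : T₀) (k : X₀ ⟶ X) (_ : Q₀.trW k) (b : X₀ ⟶ Y),
        L.map (ι.map k) ≫ f = L.map (ι.map b) := by
    intro X Y f
    obtain ⟨φ, hφ⟩ := Localization.exists_rightFraction L Q.trW f
    obtain ⟨c, u, v, mem, hc⟩ := φ.hs
    obtain ⟨y, hy, g₀, h₀, hfac'⟩ := hfact X c hc u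
    obtain ⟨X₀, k, h₁, mem₁⟩ := distinguished_cocone_triangle₁ g₀
    have hk : Q₀.trW k := ⟨y, g₀, h₁, mem₁, hy⟩
    have hcomp : ι.map k ≫ (Triangle.mk φ.s u v).mor₂ = 0 := by
      change ι.map k ≫ u = 0
      rw [hfac', ← Category.assoc, ← ι.map_comp]
      have := comp_distTriang_mor_zero₁₂ _ mem₁
      change k ≫ g₀ = 0 at this
      rw [this, ι.map_zero, Limits.zero_comp]
    obtain ⟨m, hm⟩ := Pretriangulated.Triangle.coyoneda_exact₂ _ mem (ι.map k) hcomp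
    refine ⟨X₀, k, hk, ι.preimage (m ≫ φ.f), ?_⟩
    have := Localization.inverts L Q.trW φ.s φ.hs
    rw [ι.map_preimage, hφ, hm]
    change L.map (m ≫ φ.s) ≫ _ = _
    erw [L.map_comp, Category.assoc, MorphismProperty.RightFraction.map_s_comp_map,
      L.map_comp]
    rfl
  have hES := Localization.essSurj L₀ Q₀.trW
  -- naturality of `e` reformulated
  have hnat : ∀ {X Y : T₀} (f : X ⟶ Y),
      G.map (L₀.map f) = e.hom.app X ≫ L.map (ι.map f) ≫ e.inv.app Y := by
    intro X Y f
    have h := e.hom.naturality f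
    dsimp at h
    rw [← Category.assoc, ← h, Category.assoc, Iso.hom_inv_id_app]
    simp
  constructor
  · -- Full
    refine ⟨fun {a b} f => ?_⟩
    let ea := L₀.objObjPreimageIso a
    let eb := L₀.objObjPreimageIso b
    set X := L₀.objPreimage a
    set Y := L₀.objPreimage b
    set f'' : L.obj (ι.obj X) ⟶ L.obj (ι.obj Y) :=
      e.inv.app X ≫ G.map ea.hom ≫ f ≫ G.map eb.inv ≫ e.hom.app Y with hf''
    obtain ⟨X₀, k, hk, b₀, hb⟩ := key_full X Y f''
    have hik : IsIso (L.map (ι.map k)) := Localization.inverts L Q.trW _ (hW k hk)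
    have h0k : IsIso (L₀.map k) := Localization.inverts L₀ Q₀.trW k hk
    refine ⟨ea.inv ≫ inv (L₀.map k) ≫ L₀.map b₀ ≫ eb.hom, ?_⟩
    have hGk : G.map (L₀.map k) = e.hom.app X₀ ≫ L.map (ι.map k) ≫ e.inv.app X := hnat k
    have hGb : G.map (L₀.map b₀) = e.hom.app X₀ ≫ L.map (ι.map b₀) ≫ e.inv.app Y := hnat b₀
    have hinv : inv (G.map (L₀.map k)) =
        e.hom.app X ≫ inv (L.map (ι.map k)) ≫ e.inv.app X₀ := by
      rw [← cancel_epi (G.map (L₀.map k)), IsIso.hom_inv_id, hGk]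
      simp
    rw [G.map_comp, G.map_comp, G.map_comp, G.map_inv, hinv, hGb, ← hb, hf'']
    simp
  · -- Faithful
    refine ⟨fun {a b} α β hαβ => ?_⟩
    let ea := L₀.objObjPreimageIso a
    let eb := L₀.objObjPreimageIso b
    suffices h : ea.hom ≫ α ≫ eb.inv = ea.hom ≫ β ≫ eb.inv by
      rw [← cancel_epi ea.hom, ← cancel_mono eb.inv, Category.assoc, Category.assoc, h]
    obtain ⟨φ, hφ₁, hφ₂⟩ := Localization.exists_leftFraction₂ L₀ Q₀.trW
      (ea.hom ≫ α ≫ eb.inv) (ea.hom ≫ β ≫ eb.inv)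
    rw [hφ₁, hφ₂]
    have hiso := Localization.inverts L₀ Q₀.trW φ.s φ.hs
    have heq : L₀.map φ.f = L₀.map φ.f' := by
      apply key_faithful
      have hGeq : G.map (L₀.map φ.f) = G.map (L₀.map φ.f') := by
        have h1 : G.map (ea.hom ≫ α ≫ eb.inv) = G.map (ea.hom ≫ β ≫ eb.inv) := by
          rw [G.map_comp, G.map_comp, G.map_comp, G.map_comp, hαβ]
        rw [hφ₁, hφ₂] at h1
        have h2 := h1
        dsimp [MorphismProperty.LeftFraction.map] at h2
        rw [G.map_comp, G.map_comp] at h2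
        simp only [Functor.map_inv] at h2
        exact (cancel_mono (inv (G.map (L₀.map φ.s)))).mp h2
      rw [hnat φ.f, hnat φ.f'] at hGeq
      simp only [← Category.assoc] at hGeq
      exact (cancel_epi (e.hom.app _)).mp ((cancel_mono (e.inv.app _)).mp hGeq)
    dsimp [MorphismProperty.LeftFraction.map]
    rw [heq]
end

section
/- Let T be a triangulated category, Q a triangulated subcategory, and Y an object of T. The category Q_Y, whose objects are morphisms f : Y → Z in T such that Cone(f) is isomorphic to an object of Q, and whose morphisms (Y → Z) → (Y → Z') are morphisms Z → Z' in T commuting with the maps from Y, is a filtered category. -/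
open CategoryTheory Limits Pretriangulated

/-- For a triangulated subcategory `Q` of a triangulated category `T` and `Y : T`,
the category `Q_Y` of morphisms `f : Y ⟶ Z` whose cone lies in `Q` (a full
subcategory of the under category `Under Y`) is filtered. -/
theorem stmt_14 {T : Type} [Category T] [HasZeroObject T] [HasShift T ℤ]
    [Preadditive T] [∀ n : ℤ, (shiftFunctor T n).Additive] [Pretriangulated T]
    [IsTriangulated T]
    (Q : ObjectProperty T) [Q.IsTriangulated] [Q.IsClosedUnderIsomorphisms] (Y : T) :
    IsFiltered (ObjectProperty.FullSubcategory (fun u : Under Y => Q.trW u.hom)) := by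
  have : Nonempty (ObjectProperty.FullSubcategory (fun u : Under Y => Q.trW u.hom)) :=
    ⟨⟨Under.mk (𝟙 Y), Q.trW.id_mem Y⟩⟩
  refine { nonempty := this, cocone_objs := ?_, cocone_maps := ?_ }
  · rintro ⟨u, hu⟩ ⟨v, hv⟩
    obtain ⟨ψ, fac⟩ := (MorphismProperty.RightFraction.mk u.hom hu v.hom).exists_leftFraction
    refine ⟨⟨Under.mk (u.hom ≫ ψ.f), ?_⟩,
      ObjectProperty.homMk (Under.homMk ψ.f rfl), ObjectProperty.homMk (Under.homMk ψ.s ?_), trivial⟩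
    · rw [show u.hom ≫ ψ.f = v.hom ≫ ψ.s by simpa using fac.symm]
      exact Q.trW.comp_mem _ _ hv ψ.hs
    · simpa using fac
  · rintro ⟨u, hu⟩ ⟨v, hv⟩ f g
    obtain ⟨Z, t, ht, fac⟩ := MorphismProperty.HasLeftCalculusOfFractions.ext
      f.hom.right g.hom.right u.hom hu (by simp [Under.w f.hom, Under.w g.hom])
    exact ⟨⟨Under.mk (v.hom ≫ t), Q.trW.comp_mem _ _ hv ht⟩, ObjectProperty.homMk (Under.homMk t rfl),
      by apply ObjectProperty.hom_ext; apply CommaMorphism.ext <;> first | apply Subsingleton.elim | exact fac⟩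
end
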